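/- arXiv:1010.2075 — 4 statements merged into one kernel-verified Lean document; each statement's English description precedes it below -/
import Mathlib

section
/- Let α, β, γ, μ, κ, D be real constants with μ D² ≠ 0, and set ν = 0. Then the travelling-wave coefficients A₁(y) = α/(μ D²), A₀ = 0, B₀(y) = β/(μ D²), C₂ = C₁ = 0, C₀(y) = (2γ y + κ − D²)/(μ D²), D₄ = D₃ = 0, D₂(y) = 2γ/(μ D²), D₁ = D₀ = 0 satisfy the ten linearization conditions (L1)–(L10) at every point (x,y) ∈ ℝ² if and only if α = 0, β = 0, and γ = 0. -/
open Real Set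

/-- Partial derivative in the first variable. -/
noncomputable def pdx (f : ℝ → ℝ → ℝ) (x y : ℝ) : ℝ := deriv (fun x' => f x' y) x

/-- Partial derivative in the second variable. -/
noncomputable def pdy (f : ℝ → ℝ → ℝ) (x y : ℝ) : ℝ := deriv (fun y' => f x y') y

/-- The ten linearization conditions (L1)–(L10) at a point `(x, y)`. -/
def LinConds (A1 A0 B0 C2 C1 C0 D4 D3 D2 D1 D0 : ℝ → ℝ → ℝ) (x y : ℝ) : Prop :=
  -- (L1)
  pdy A0 x y - pdx A1 x y = 0 ∧
  -- (L2)
  4 * B0 x y - 3 * A1 x y = 0 ∧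
  -- (L3)
  12 * pdy A1 x y + 3 * (A1 x y) ^ 2 - 8 * C2 x y = 0 ∧
  -- (L4)
  12 * pdx A1 x y + 3 * A0 x y * A1 x y - 4 * C1 x y = 0 ∧
  -- (L5)
  32 * pdy C0 x y + 12 * pdx A0 x y * A1 x y - 16 * pdx C1 x y
    + 3 * (A0 x y) ^ 2 * A1 x y - 4 * A0 x y * C1 x y = 0 ∧
  -- (L6)
  4 * pdy C2 x y + A1 x y * C2 x y - 24 * D4 x y = 0 ∧
  -- (L7)
  4 * pdy C1 x y + A1 x y * C1 x y - 12 * D3 x y = 0 ∧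
  -- (L8)
  16 * pdx C1 x y - 12 * pdx A0 x y * A1 x y - 3 * (A0 x y) ^ 2 * A1 x y
    + 4 * A0 x y * C1 x y + 8 * A1 x y * C0 x y - 32 * D2 x y = 0 ∧
  -- (L9)
  192 * pdx D2 x y + 36 * pdx A0 x y * A0 x y * A1 x y - 48 * pdx A0 x y * C1 x y
    - 48 * pdx C0 x y * A1 x y - 288 * pdy D1 x y + 9 * (A0 x y) ^ 3 * A1 x y
    - 12 * (A0 x y) ^ 2 * C1 x y - 36 * A0 x y * A1 x y * C0 x y
    + 48 * A0 x y * D2 x y + 32 * C0 x y * C1 x y = 0 ∧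
  -- (L10)
  384 * pdx (pdy D1) x y -
    (3 * ((3 * A0 x y * A1 x y - 4 * C1 x y) * (A0 x y) ^ 2
          + 16 * (2 * A1 x y * D1 x y + C0 x y * C1 x y)
          - 16 * (A1 x y * C0 x y - D2 x y) * A0 x y) * A0 x y
      - 32 * (4 * (C1 x y * D1 x y - 2 * C2 x y * D0 x y + C0 x y * D2 x y)
          + (3 * A1 x y * D0 x y - (C0 x y) ^ 2) * A1 x y)
      - 96 * pdy D1 x y * A0 x y + 384 * pdy D0 x y * A1 x y
      + 1536 * pdy (pdy D0) x y
      - 16 * (3 * A0 x y * A1 x y - 4 * C1 x y) * pdx C0 x y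
      + 12 * ((3 * A0 x y * A1 x y - 4 * C1 x y) * A0 x y
          - 4 * (A1 x y * C0 x y - 4 * D2 x y)) * pdx A0 x y) = 0

/-! A single point already decides everything: there (L3) reads `3 A₁² = 0`, (L5) reads
`32 ∂_y C₀ = 0` with `∂_y C₀ = D₂`, and then (L2) forces `B₀ = 0`; conversely, once `A₁`, `B₀`
and `D₂` vanish every condition is an identity. -/

theorem pdy_affine (d e x y : ℝ) : pdy (fun _ y => d * y + e) x y = d := by
  simp [pdy]

theorem linConds_const_affine_iff (a b d e x y : ℝ) :
    LinConds (fun _ _ => a) (fun _ _ => 0) (fun _ _ => b) (fun _ _ => 0) (fun _ _ => 0)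
        (fun _ y => d * y + e) (fun _ _ => 0) (fun _ _ => 0) (fun _ _ => d) (fun _ _ => 0)
        (fun _ _ => 0) x y ↔
      a = 0 ∧ b = 0 ∧ d = 0 := by
  simp only [LinConds, pdy_affine]
  simp only [pdx, pdy, deriv_const]
  constructor
  · rintro ⟨-, hL2, hL3, -, hL5, -⟩
    have ha : a = 0 := by nlinarith
    exact ⟨ha, by linarith, by linarith⟩
  · rintro ⟨rfl, rfl, rfl⟩
    norm_num

/-- Case `ν = 0` (with `μ D² ≠ 0`): the travelling-wave coefficients satisfy the ten
linearization conditions (L1)–(L10) at every point of `ℝ²` if and only if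
`α = 0`, `β = 0` and `γ = 0`. -/
theorem linconds_case_nu_zero (α β γ μ κ D : ℝ) (hμD : μ * D ^ 2 ≠ 0) :
    (∀ x y : ℝ,
      LinConds
        (fun _ _ => α / (μ * D ^ 2))                       -- A₁
        (fun _ _ => 0)                                     -- A₀
        (fun _ _ => β / (μ * D ^ 2))                       -- B₀
        (fun _ _ => 0)                                     -- C₂
        (fun _ _ => 0)                                     -- C₁
        (fun _ y => (2 * γ * y + κ - D ^ 2) / (μ * D ^ 2)) -- C₀
        (fun _ _ => 0)                                     -- D₄
        (fun _ _ => 0)                                     -- D₃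
        (fun _ _ => 2 * γ / (μ * D ^ 2))                   -- D₂
        (fun _ _ => 0)                                     -- D₁
        (fun _ _ => 0)                                     -- D₀
        x y) ↔
      (α = 0 ∧ β = 0 ∧ γ = 0) := by
  have hC0 : (fun (_ y : ℝ) => (2 * γ * y + κ - D ^ 2) / (μ * D ^ 2))
      = fun _ y => 2 * γ / (μ * D ^ 2) * y + (κ - D ^ 2) / (μ * D ^ 2) := by
    funext _ y; ring
  rw [hC0]
  simp only [linConds_const_affine_iff, forall_const]
  simp [hμD]
end

section
/- Let α, μ, ν, κ, D be real constants with ν ≠ 0, and set γ = 0 and β = 0. Then the travelling-wave coefficients A₁(y) = α/(ν y + μ D²), A₀ = 0, B₀ = 0, C₂ = C₁ = 0, C₀(y) = (κ − D²)/(ν y + μ D²), D₄ = D₃ = D₂ = D₁ = D₀ = 0 satisfy the ten linearization conditions (L1)–(L10) at every point (x,y) with ν y + μ D² ≠ 0 if and only if α = 0 and κ = D². -/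
open Real Set

lemma pdx_eq_zero_of_indep_x (f : ℝ → ℝ) (x y : ℝ) : pdx (fun _ y => f y) x y = 0 :=
  deriv_const x (f y)

lemma pdy_const (c : ℝ) : pdy (fun _ _ => c) = fun _ _ => 0 :=
  funext₂ fun _ _ => deriv_const _ c

lemma pdy_div_affine (c a b x y : ℝ) (h : a * y + b ≠ 0) :
    pdy (fun _ y => c / (a * y + b)) x y = -(c * a) / (a * y + b) ^ 2 := by
  rw [pdy, deriv_const_div (d := fun y => a * y + b) c (by fun_prop) h]
  simp

/-- With `d = ν y + μ D²`, (L2) reads `-3α/d = 0` and (L5) reads `-32 (κ - D²) ν / d² = 0`;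
every other condition vanishes identically or carries a factor `α`. -/
lemma linConds_travellingWave_iff (α μ ν κ D x y : ℝ) (hd : ν * y + μ * D ^ 2 ≠ 0) :
    LinConds (fun _ y => α / (ν * y + μ * D ^ 2)) (fun _ _ => 0) (fun _ _ => 0) (fun _ _ => 0)
        (fun _ _ => 0) (fun _ y => (κ - D ^ 2) / (ν * y + μ * D ^ 2)) (fun _ _ => 0)
        (fun _ _ => 0) (fun _ _ => 0) (fun _ _ => 0) (fun _ _ => 0) x y ↔
      α = 0 ∧ (κ - D ^ 2) * ν = 0 := by
  simp only [LinConds, pdx_eq_zero_of_indep_x, pdy_const, pdy_div_affine _ _ _ x y hd]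
  constructor
  · rintro ⟨-, hL2, -, -, hL5, -⟩
    exact ⟨by simpa [hd] using hL2, by simpa [hd] using hL5⟩
  · rintro ⟨rfl, hκν⟩
    simp [hκν]

/-- Case `ν ≠ 0`, `γ = 0`, `β = 0`: the travelling-wave coefficients satisfy the ten
linearization conditions (L1)–(L10) at every point `(x, y)` with `ν y + μ D² ≠ 0`
if and only if `α = 0` and `κ = D²`. -/
theorem linconds_case_gamma_zero_beta_zero (α μ ν κ D : ℝ) (hν : ν ≠ 0) :
    (∀ x y : ℝ, ν * y + μ * D ^ 2 ≠ 0 →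
      LinConds
        (fun _ y => α / (ν * y + μ * D ^ 2))               -- A₁
        (fun _ _ => 0)                                     -- A₀
        (fun _ _ => 0)                                     -- B₀
        (fun _ _ => 0)                                     -- C₂
        (fun _ _ => 0)                                     -- C₁
        (fun _ y => (κ - D ^ 2) / (ν * y + μ * D ^ 2))     -- C₀
        (fun _ _ => 0)                                     -- D₄
        (fun _ _ => 0)                                     -- D₃
        (fun _ _ => 0)                                     -- D₂
        (fun _ _ => 0)                                     -- D₁
        (fun _ _ => 0)                                     -- D₀
        x y) ↔
      (α = 0 ∧ κ = D ^ 2) := by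
  constructor
  · intro h
    obtain ⟨y₀, hy₀⟩ : ∃ y, ν * y + μ * D ^ 2 ≠ 0 :=
      ⟨(1 - μ * D ^ 2) / ν, by rw [mul_div_cancel₀ _ hν]; norm_num⟩
    obtain ⟨hα, hκν⟩ := (linConds_travellingWave_iff α μ ν κ D 0 y₀ hy₀).1 (h 0 y₀ hy₀)
    exact ⟨hα, by simpa [sub_eq_zero, hν] using hκν⟩
  · rintro ⟨hα, hκ⟩ x y hd
    exact (linConds_travellingWave_iff α μ ν κ D x y hd).2 ⟨hα, by simp [hκ]⟩
end

section
/- Let μ, ν, D be real constants with ν ≠ 0, set α = 4ν, β = 3ν, γ = 0 and κ = D². Let H : ℝ → ℝ be four times differentiable and suppose there are real constants C₀, C₁, C₂, C₃ such that H(s)²/2 + (μ D²/ν) H(s) = C₀ + C₁ s + C₂ s² + C₃ s³ for all s ∈ ℝ. Then u(x,t) = H(x − Dt) satisfies the PDE u_tt = (κ u + γ u²)_xx + ν u u_xxxx + μ u_xxtt + α u_x u_xxx + β (u_xx)² at every point of ℝ². -/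
/-!
Along the characteristic `s = x - D t` every `t`-derivative of `u(x,t) = H(x - D t)` is `-D`
times the corresponding `x`-derivative, so `u_tt = D² u_xx` cancels `κ u_xx` and `μ u_xxtt`
becomes `μ D² H⁗`. With `α = 4ν`, `β = 3ν` the PDE reduces to the ODE
`ν (H H⁗ + 4 H' H''' + 3 H''²) + μ D² H⁗ = 0`, which is `ν` times the fourth derivative of
`H²/2 + (μ D²/ν) H`; by hypothesis that function is a cubic polynomial, so its fourth
derivative vanishes.
-/

open Real Set

/-- `u` satisfies the Boussinesq-type PDE
`u_tt = (κ u + γ u²)_xx + ν u u_xxxx + μ u_xxtt + α u_x u_xxx + β (u_xx)²`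
at the point `(x, t)`. -/
def SatisfiesPDE (α β γ μ ν κ : ℝ) (u : ℝ → ℝ → ℝ) (x t : ℝ) : Prop :=
  iteratedDeriv 2 (fun t' => u x t') t =
    iteratedDeriv 2 (fun x' => κ * u x' t + γ * (u x' t) ^ 2) x
    + ν * u x t * iteratedDeriv 4 (fun x' => u x' t) x
    + μ * iteratedDeriv 2 (fun t' => iteratedDeriv 2 (fun x' => u x' t') x) t
    + α * deriv (fun x' => u x' t) x * iteratedDeriv 3 (fun x' => u x' t) x
    + β * (iteratedDeriv 2 (fun x' => u x' t) x) ^ 2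

open Polynomial

section IteratedDeriv

variable {𝕜 F : Type*} [NontriviallyNormedField 𝕜] [NormedAddCommGroup F] [NormedSpace 𝕜 F]

theorem iteratedDeriv_iteratedDeriv (m n : ℕ) (f : 𝕜 → F) :
    iteratedDeriv m (iteratedDeriv n f) = iteratedDeriv (m + n) f := by
  simp only [iteratedDeriv_eq_iterate, Function.iterate_add_apply]

theorem iteratedDeriv_comp_mul_left (n : ℕ) (f : 𝕜 → F) (c : 𝕜) :
    iteratedDeriv n (fun x => f (c * x)) = fun x => c ^ n • iteratedDeriv n f (c * x) := by
  induction n generalizing f with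
  | zero => simp
  | succ n ih =>
    funext x
    rw [iteratedDeriv_succ', funext (deriv_comp_mul_left c f), iteratedDeriv_fun_const_smul_field,
      ih, iteratedDeriv_succ', pow_succ', mul_smul]

theorem iteratedDeriv_comp_const_sub_mul (n : ℕ) (f : 𝕜 → F) (a b : 𝕜) :
    iteratedDeriv n (fun y => f (a - b * y))
      = fun y => (-b) ^ n • iteratedDeriv n f (a - b * y) := by
  simpa [← sub_eq_add_neg, iteratedDeriv_comp_const_add] using
    iteratedDeriv_comp_mul_left n (fun z => f (a + z)) (-b)

theorem Polynomial.iteratedDeriv_eval (p : 𝕜[X]) (n : ℕ) :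
    iteratedDeriv n (fun x => p.eval x) = fun x => (derivative^[n] p).eval x := by
  induction n with
  | zero => simp
  | succ n ih =>
    rw [iteratedDeriv_succ, ih, Function.iterate_succ_apply']
    funext x
    exact Polynomial.deriv _

theorem iteratedDeriv_four_cubic (C₀ C₁ C₂ C₃ : 𝕜) :
    iteratedDeriv 4 (fun s => C₀ + C₁ * s + C₂ * s ^ 2 + C₃ * s ^ 3) = 0 := by
  have hcubic : (fun s => C₀ + C₁ * s + C₂ * s ^ 2 + C₃ * s ^ 3)
      = fun s => (C C₃ * X ^ 3 + C C₂ * X ^ 2 + C C₁ * X + C C₀).eval s := by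
    funext s
    simp only [eval_add, eval_mul, eval_C, eval_pow, eval_X]
    ring
  rw [hcubic, Polynomial.iteratedDeriv_eval,
    iterate_derivative_eq_zero (natDegree_cubic_le.trans_lt (by norm_num))]
  exact funext fun _ => eval_zero

theorem iteratedDeriv_succ_eq_of_hasDerivAt {f g g' : 𝕜 → F} {n : ℕ}
    (h : iteratedDeriv n f = g) (hg : ∀ s, HasDerivAt g (g' s) s) :
    iteratedDeriv (n + 1) f = g' := by
  rw [iteratedDeriv_succ, h]
  exact funext fun s => (hg s).deriv

theorem iteratedDeriv_four_sq {f : 𝕜 → 𝕜} (hf : ∀ k < 4, Differentiable 𝕜 (iteratedDeriv k f)) :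
    iteratedDeriv 4 (fun s => f s ^ 2) = fun s => 2 * (f s * iteratedDeriv 4 f s
      + 4 * deriv f s * iteratedDeriv 3 f s + 3 * iteratedDeriv 2 f s ^ 2) := by
  have d : ∀ k < 4, ∀ s, HasDerivAt (iteratedDeriv k f) (iteratedDeriv (k + 1) f s) s :=
    fun k hk s => by rw [iteratedDeriv_succ]; exact (hf k hk s).hasDerivAt
  have d₀ : ∀ s, HasDerivAt f (deriv f s) s := by simpa using d 0 (by norm_num)
  have d₁ : ∀ s, HasDerivAt (deriv f) (iteratedDeriv 2 f s) s := by
    simpa using d 1 (by norm_num)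
  have d₂ := d 2 (by norm_num)
  have d₃ := d 3 (by norm_num)
  have h₁ : iteratedDeriv 1 (fun s => f s ^ 2) = fun s => 2 * (f s * deriv f s) :=
    iteratedDeriv_succ_eq_of_hasDerivAt iteratedDeriv_zero fun s =>
      ((d₀ s).pow 2).congr_deriv (by ring)
  have h₂ : iteratedDeriv 2 (fun s => f s ^ 2)
      = fun s => 2 * (deriv f s ^ 2 + f s * iteratedDeriv 2 f s) :=
    iteratedDeriv_succ_eq_of_hasDerivAt h₁ fun s =>
      (((d₀ s).mul (d₁ s)).const_mul 2).congr_deriv (by ring)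
  have h₃ : iteratedDeriv 3 (fun s => f s ^ 2)
      = fun s => 2 * (3 * deriv f s * iteratedDeriv 2 f s + f s * iteratedDeriv 3 f s) :=
    iteratedDeriv_succ_eq_of_hasDerivAt h₂ fun s =>
      ((((d₁ s).pow 2).add ((d₀ s).mul (d₂ s))).const_mul 2).congr_deriv (by ring)
  exact iteratedDeriv_succ_eq_of_hasDerivAt h₃ fun s =>
    (((((d₁ s).const_mul 3).mul (d₂ s)).add ((d₀ s).mul (d₃ s))).const_mul 2).congr_deriv
      (by ring)

end IteratedDeriv

section FourthOrderODE

variable {𝕜 : Type*} [NontriviallyNormedField 𝕜] [CharZero 𝕜]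

theorem iteratedDeriv_identity_of_sq_eq_cubic {f : 𝕜 → 𝕜}
    (hf : ∀ k < 4, Differentiable 𝕜 (iteratedDeriv k f)) {C₀ C₁ C₂ C₃ : 𝕜}
    (hcubic : ∀ s, f s ^ 2 = C₀ + C₁ * s + C₂ * s ^ 2 + C₃ * s ^ 3) (s : 𝕜) :
    f s * iteratedDeriv 4 f s + 4 * deriv f s * iteratedDeriv 3 f s
      + 3 * iteratedDeriv 2 f s ^ 2 = 0 := by
  have h := congrFun (iteratedDeriv_four_sq hf) s
  rw [funext hcubic, iteratedDeriv_four_cubic, Pi.zero_apply, eq_comm, mul_eq_zero] at h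
  exact h.resolve_left two_ne_zero

/-- Completing the square, `H²/2 + c H = (c + H)²/2 - c²/2`, reduces this to the case `c = 0`. -/
theorem iteratedDeriv_identity_of_sq_half_add_mul_eq_cubic {H : 𝕜 → 𝕜}
    (hH : ∀ k < 4, Differentiable 𝕜 (iteratedDeriv k H)) {c C₀ C₁ C₂ C₃ : 𝕜}
    (hrel : ∀ s, H s ^ 2 / 2 + c * H s = C₀ + C₁ * s + C₂ * s ^ 2 + C₃ * s ^ 3) (s : 𝕜) :
    (H s + c) * iteratedDeriv 4 H s + 4 * deriv H s * iteratedDeriv 3 H s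
      + 3 * iteratedDeriv 2 H s ^ 2 = 0 := by
  have hK : ∀ k < 4, Differentiable 𝕜 (iteratedDeriv k (fun s => c + H s)) := by
    intro k hk
    rcases Nat.eq_zero_or_pos k with rfl | hk₀
    · simpa using (hH 0 (by norm_num)).const_add c
    · rw [show iteratedDeriv k (fun s => c + H s) = iteratedDeriv k H from
        funext fun _ => iteratedDeriv_const_add hk₀ c]
      exact hH k hk
  have hcubic : ∀ s, (c + H s) ^ 2
      = (2 * C₀ + c ^ 2) + 2 * C₁ * s + 2 * C₂ * s ^ 2 + 2 * C₃ * s ^ 3 := fun s => by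
    linear_combination 2 * hrel s
  have h := iteratedDeriv_identity_of_sq_eq_cubic hK hcubic s
  rw [iteratedDeriv_const_add (by norm_num), iteratedDeriv_const_add (by norm_num),
    iteratedDeriv_const_add (by norm_num), deriv_const_add] at h
  linear_combination h

end FourthOrderODE

/-- With `α = 4ν`, `β = 3ν`, `γ = 0`, `κ = D²` (`ν ≠ 0`): if a four times differentiable
`H` satisfies the implicit relation `H²/2 + (μD²/ν) H = C₀ + C₁ s + C₂ s² + C₃ s³`,
then `u(x,t) = H(x − Dt)` satisfies the PDE
`u_tt = (κ u + γ u²)_xx + ν u u_xxxx + μ u_xxtt + α u_x u_xxx + β (u_xx)²`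
at every point of `ℝ²`. -/
theorem implicit_wave_satisfies_pde (μ ν D : ℝ) (hν : ν ≠ 0) (H : ℝ → ℝ)
    (hH : ∀ k < 4, Differentiable ℝ (iteratedDeriv k H))
    (C₀ C₁ C₂ C₃ : ℝ)
    (hrel : ∀ s : ℝ,
      (H s) ^ 2 / 2 + (μ * D ^ 2 / ν) * H s = C₀ + C₁ * s + C₂ * s ^ 2 + C₃ * s ^ 3) :
    ∀ x t : ℝ,
      SatisfiesPDE (4 * ν) (3 * ν) 0 μ ν (D ^ 2) (fun x' t' => H (x' - D * t')) x t := by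
  intro x t
  have hode := iteratedDeriv_identity_of_sq_half_add_mul_eq_cubic hH hrel (x - D * t)
  simp only [SatisfiesPDE, zero_mul, add_zero, iteratedDeriv_const_mul_field,
    iteratedDeriv_comp_sub_const, iteratedDeriv_comp_const_sub_mul, iteratedDeriv_iteratedDeriv,
    deriv_comp_sub_const, smul_eq_mul, Nat.reduceAdd]
  have hc : ν * (μ * D ^ 2 / ν) = μ * D ^ 2 := mul_div_cancel₀ _ hν
  linear_combination -ν * hode + iteratedDeriv 4 H (x - D * t) * hc
end

section
/- Let γ, μ, ν, κ, D be real constants with ν ≠ 0, γ/ν > 0 and κν = (2γμ + ν)D², and set ω = √(γ/(5ν)), α = 4ν, β = 3ν. Let I be an open interval contained in (−π/(2ω), π/(2ω)) and let H : I → ℝ be a four times differentiable solution of the travelling-wave ODE (ν H + μ D²) H'''' + 4ν H' H''' + 3ν (H'')² + (2γ H + κ − D²) H'' + 2γ (H')² = 0 on I. Define v on the open interval J = {tan(ωx) : x ∈ I} by v(t) = (1 + t²)^{3/2} · ( H(arctan(t)/ω)²/2 + (D²μ/ν) H(arctan(t)/ω) ), so that v(tan(ωx)) = sec³(ωx)·(H(x)²/2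 + (D²μ/ν)H(x)) for x ∈ I. Then v is four times differentiable on J and satisfies the linear equation v''''(t) = 9 (1 + t²)^{−4} v(t) for every t ∈ J. -/
open Real Set

/-- A function of one real variable is four times differentiable on a set:
`f, f', f'', f'''` are all differentiable at each point of the set. -/
def FourTimesDiffOn (f : ℝ → ℝ) (s : Set ℝ) : Prop :=
  ∀ k < 4, ∀ x ∈ s, DifferentiableAt ℝ (iteratedDeriv k f) x

/-!
With `c = D²μ/ν` and `g = H²/2 + c H`, the choice `α = 4ν`, `β = 3ν` makes the nonlinear part of
the ODE the Leibniz expansion of `g'''' = (H + c) H'''' + 4 H' H''' + 3 (H'')²`, and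
`κ ν = (2γμ + ν) D²`, `γ = 5νω²` turn the whole ODE into `ν (g'''' + 10 ω² g'') = 0`.
For `t = tan θ` the fourth derivative of `(1 + t²)^{3/2} G (arctan t)` is
`(1 + t²)^{-5/2} (G'''' + 10 G'' + 9 G) (arctan t)`, the operator `(d²/dθ² + 1)(d²/dθ² + 9)`.
Applied to `G θ = g (θ / ω)`, the part `G'''' + 10 G''` vanishes and only `9 G` survives.
-/

theorem eqOn_iteratedDeriv_of_hasDerivAt {𝕜 : Type*} [NontriviallyNormedField 𝕜] {E : Type*}
    [NormedAddCommGroup E] [NormedSpace 𝕜 E] {U : Set 𝕜} (hU : IsOpen U) {F : ℕ → 𝕜 → E}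
    {n : ℕ} (hF : ∀ k < n, ∀ x ∈ U, HasDerivAt (F k) (F (k + 1) x) x) :
    ∀ k ≤ n, EqOn (iteratedDeriv k (F 0)) (F k) U := by
  intro k
  induction k with
  | zero => simpa using eqOn_refl (F 0) U
  | succ k ih =>
    intro hk x hx
    rw [iteratedDeriv_succ, ((ih (by omega)).eventuallyEq_of_mem (hU.mem_nhds hx)).deriv_eq]
    exact (hF k (by omega) x hx).deriv

theorem fourTimesDiffOn_of_hasDerivAt {U : Set ℝ} (hU : IsOpen U) {F : ℕ → ℝ → ℝ}
    (hF : ∀ k < 4, ∀ x ∈ U, HasDerivAt (F k) (F (k + 1) x) x) : FourTimesDiffOn (F 0) U :=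
  fun k hk x hx =>
    (((eqOn_iteratedDeriv_of_hasDerivAt hU hF k hk.le).eventuallyEq_of_mem
      (hU.mem_nhds hx)).differentiableAt_iff).2 (hF k hk x hx).differentiableAt

theorem FourTimesDiffOn.hasDerivAt_iteratedDeriv {f : ℝ → ℝ} {s : Set ℝ}
    (hf : FourTimesDiffOn f s) {k : ℕ} (hk : k < 4) {x : ℝ} (hx : x ∈ s) :
    HasDerivAt (iteratedDeriv k f) (iteratedDeriv (k + 1) f x) x := by
  rw [iteratedDeriv_succ]
  exact (hf k hk x hx).hasDerivAt

noncomputable def halfSqAddMulDeriv (c : ℝ) (F : ℕ → ℝ → ℝ) : ℕ → ℝ → ℝ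
  | 0, x => F 0 x ^ 2 / 2 + c * F 0 x
  | 1, x => (F 0 x + c) * F 1 x
  | 2, x => (F 0 x + c) * F 2 x + F 1 x ^ 2
  | 3, x => (F 0 x + c) * F 3 x + 3 * F 1 x * F 2 x
  | 4, x => (F 0 x + c) * F 4 x + 4 * F 1 x * F 3 x + 3 * F 2 x ^ 2
  | _, _ => 0

theorem hasDerivAt_halfSqAddMulDeriv {c x : ℝ} {F : ℕ → ℝ → ℝ}
    (hF : ∀ k < 4, HasDerivAt (F k) (F (k + 1) x) x) :
    ∀ k < 4, HasDerivAt (halfSqAddMulDeriv c F k) (halfSqAddMulDeriv c F (k + 1) x) x := by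
  have h0 := hF 0 (by norm_num)
  have h1 := hF 1 (by norm_num)
  have h2 := hF 2 (by norm_num)
  have h3 := hF 3 (by norm_num)
  intro k hk
  interval_cases k
  · exact (((h0.pow 2).div_const 2).add (h0.const_mul c)).congr_deriv
      (by simp only [halfSqAddMulDeriv]; ring)
  · exact ((h0.add_const c).mul h1).congr_deriv (by simp only [halfSqAddMulDeriv]; ring)
  · exact (((h0.add_const c).mul h2).add (h1.pow 2)).congr_deriv
      (by simp only [halfSqAddMulDeriv]; ring)
  · exact (((h0.add_const c).mul h3).add ((h1.const_mul 3).mul h2)).congr_deriv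
      (by simp only [halfSqAddMulDeriv]; ring)

theorem travelling_wave_eq_mul_halfSqAddMulDeriv {γ μ ν κ D ω c x : ℝ} {F : ℕ → ℝ → ℝ}
    (hc : ν * c = μ * D ^ 2) (hκ : κ = 2 * γ * c + D ^ 2) (hγ : γ = 5 * ν * ω ^ 2) :
    (ν * F 0 x + μ * D ^ 2) * F 4 x + 4 * ν * F 1 x * F 3 x + 3 * ν * F 2 x ^ 2
        + (2 * γ * F 0 x + κ - D ^ 2) * F 2 x + 2 * γ * F 1 x ^ 2
      = ν * (halfSqAddMulDeriv c F 4 x + 10 * ω ^ 2 * halfSqAddMulDeriv c F 2 x) := by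
  simp only [halfSqAddMulDeriv]
  linear_combination (-F 4 x) * hc + 2 * (F 0 x * F 2 x + F 1 x ^ 2 + c * F 2 x) * hγ
    + F 2 x * hκ

theorem hasDerivAt_sqrt_one_add_sq (t : ℝ) :
    HasDerivAt (fun t => √(1 + t ^ 2)) (t / √(1 + t ^ 2)) t :=
  (((hasDerivAt_pow 2 t).const_add 1).sqrt (by positivity)).congr_deriv (by field_simp; ring)

theorem hasDerivAt_comp_arctan_div {f : ℝ → ℝ} {f' ω t : ℝ}
    (hf : HasDerivAt f f' (arctan t / ω)) :
    HasDerivAt (fun t => f (arctan t / ω)) (f' / ((1 + t ^ 2) * ω)) t :=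
  (hf.comp t ((hasDerivAt_arctan t).div_const ω)).congr_deriv (by field_simp)

/-- The `k`-th derivative of `t ↦ (1 + t²)^{3/2} F 0 (arctan t / ω)` when each `F (j + 1)` is the
derivative of `F j`. -/
noncomputable def pointTransformDeriv (ω : ℝ) (F : ℕ → ℝ → ℝ) : ℕ → ℝ → ℝ
  | 0, t => √(1 + t ^ 2) ^ 3 * F 0 (arctan t / ω)
  | 1, t => √(1 + t ^ 2) * (3 * t * F 0 (arctan t / ω) + F 1 (arctan t / ω) / ω)
  | 2, t => ((6 * t ^ 2 + 3) * F 0 (arctan t / ω) + 4 * t * F 1 (arctan t / ω) / ω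
      + F 2 (arctan t / ω) / ω ^ 2) / √(1 + t ^ 2)
  | 3, t => ((6 * t ^ 3 + 9 * t) * F 0 (arctan t / ω) + (6 * t ^ 2 + 7) * F 1 (arctan t / ω) / ω
      + 3 * t * F 2 (arctan t / ω) / ω ^ 2 + F 3 (arctan t / ω) / ω ^ 3) / √(1 + t ^ 2) ^ 3
  | 4, t => (9 * F 0 (arctan t / ω) + 10 * F 2 (arctan t / ω) / ω ^ 2
      + F 4 (arctan t / ω) / ω ^ 4) / √(1 + t ^ 2) ^ 5
  | _, _ => 0

theorem hasDerivAt_pointTransformDeriv {ω t : ℝ} (hω : ω ≠ 0) {F : ℕ → ℝ → ℝ}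
    (hF : ∀ k < 4, HasDerivAt (F k) (F (k + 1) (arctan t / ω)) (arctan t / ω)) :
    ∀ k < 4, HasDerivAt (pointTransformDeriv ω F k) (pointTransformDeriv ω F (k + 1) t) t := by
  have hs := hasDerivAt_sqrt_one_add_sq t
  have hs2 : √(1 + t ^ 2) ^ 2 = 1 + t ^ 2 := sq_sqrt (by positivity)
  have hs0 : √(1 + t ^ 2) ≠ 0 := by positivity
  have h0 := hasDerivAt_comp_arctan_div (hF 0 (by norm_num))
  have h1 := hasDerivAt_comp_arctan_div (hF 1 (by norm_num))
  have h2 := hasDerivAt_comp_arctan_div (hF 2 (by norm_num))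
  have h3 := hasDerivAt_comp_arctan_div (hF 3 (by norm_num))
  have hid := hasDerivAt_id' t
  intro k hk
  -- Each identity below holds only modulo `√(1 + t ^ 2) ^ 2 = 1 + t ^ 2`, used by `grind`.
  interval_cases k
  · refine ((hs.pow 3).mul h0).congr_deriv ?_
    simp only [pointTransformDeriv, Pi.pow_apply]
    generalize √(1 + t ^ 2) = s at hs2 hs0 ⊢
    field_simp
    grind
  · refine (hs.mul (((hid.const_mul 3).mul h0).add (h1.div_const ω))).congr_deriv ?_
    simp only [pointTransformDeriv, Pi.add_apply, Pi.mul_apply]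
    generalize √(1 + t ^ 2) = s at hs2 hs0 ⊢
    field_simp
    grind
  · refine (((((((hasDerivAt_pow 2 t).const_mul 6).add_const 3).mul h0).add
      (((hid.const_mul 4).mul h1).div_const ω)).add (h2.div_const (ω ^ 2))).div hs
      hs0).congr_deriv ?_
    simp only [pointTransformDeriv, Pi.add_apply, Pi.mul_apply]
    generalize √(1 + t ^ 2) = s at hs2 hs0 ⊢
    field_simp
    grind
  · refine ((((((((hasDerivAt_pow 3 t).const_mul 6).add (hid.const_mul 9)).mul h0).add
      (((((hasDerivAt_pow 2 t).const_mul 6).add_const 7).mul h1).div_const ω)).add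
      (((hid.const_mul 3).mul h2).div_const (ω ^ 2))).add
      (h3.div_const (ω ^ 3))).div (hs.pow 3) (pow_ne_zero 3 hs0)).congr_deriv ?_
    simp only [pointTransformDeriv, Pi.add_apply, Pi.mul_apply, Pi.pow_apply]
    generalize √(1 + t ^ 2) = s at hs2 hs0 ⊢
    field_simp
    grind

theorem pointTransformDeriv_four_eq {ω t : ℝ} (hω : ω ≠ 0) {F : ℕ → ℝ → ℝ}
    (hF : F 4 (arctan t / ω) + 10 * ω ^ 2 * F 2 (arctan t / ω) = 0) :
    pointTransformDeriv ω F 4 t = 9 / (1 + t ^ 2) ^ 4 * pointTransformDeriv ω F 0 t := by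
  have hs2 : √(1 + t ^ 2) ^ 2 = 1 + t ^ 2 := sq_sqrt (by positivity)
  have hs0 : √(1 + t ^ 2) ≠ 0 := by positivity
  have hs8 : (1 + t ^ 2) ^ 4 = √(1 + t ^ 2) ^ 8 := by
    rw [show 8 = 2 * 4 by norm_num, pow_mul, hs2]
  simp only [pointTransformDeriv]
  rw [hs8, eq_neg_of_add_eq_zero_left hF]
  field_simp
  ring

theorem image_tan_mul_eq_preimage {ω : ℝ} (hω : 0 < ω) {I : Set ℝ}
    (hI : I ⊆ Ioo (-(π / (2 * ω))) (π / (2 * ω))) :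
    (fun x => tan (ω * x)) '' I = (fun t => arctan t / ω) ⁻¹' I := by
  ext t
  constructor
  · rintro ⟨x, hx, rfl⟩
    obtain ⟨hlo, hhi⟩ := hI hx
    rw [← neg_div, div_lt_iff₀ (by positivity)] at hlo
    rw [lt_div_iff₀ (by positivity)] at hhi
    rw [mem_preimage, arctan_tan (by linarith) (by linarith), mul_div_cancel_left₀ x hω.ne']
    exact hx
  · intro ht
    exact ⟨arctan t / ω, ht, show tan (ω * (arctan t / ω)) = t by
      rw [mul_div_cancel₀ _ hω.ne', tan_arctan]⟩

theorem linearized_equation_general (γ μ ν κ D : ℝ) (hν : ν ≠ 0) (hpos : γ / ν > 0)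
    (hκ : κ * ν = (2 * γ * μ + ν) * D ^ 2)
    (ω : ℝ) (hω : ω = Real.sqrt (γ / (5 * ν)))
    (I : Set ℝ) (hI : IsOpen I)
    (hIsub : I ⊆ Set.Ioo (-(Real.pi / (2 * ω))) (Real.pi / (2 * ω)))
    (H : ℝ → ℝ) (hH : FourTimesDiffOn H I)
    (hODE : ∀ x ∈ I,
      (ν * H x + μ * D ^ 2) * iteratedDeriv 4 H x
        + 4 * ν * deriv H x * iteratedDeriv 3 H x
        + 3 * ν * (iteratedDeriv 2 H x) ^ 2
        + (2 * γ * H x + κ - D ^ 2) * iteratedDeriv 2 H x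
        + 2 * γ * (deriv H x) ^ 2 = 0)
    (v : ℝ → ℝ)
    (hv : ∀ t : ℝ,
      v t = Real.sqrt (1 + t ^ 2) ^ 3 *
        ((H (Real.arctan t / ω)) ^ 2 / 2 + (D ^ 2 * μ / ν) * H (Real.arctan t / ω))) :
    FourTimesDiffOn v ((fun x => Real.tan (ω * x)) '' I) ∧
      ∀ t ∈ (fun x => Real.tan (ω * x)) '' I,
        iteratedDeriv 4 v t = 9 / (1 + t ^ 2) ^ 4 * v t := by
  have h5 : 0 < γ / (5 * ν) := by
    rw [div_mul_eq_div_div_swap]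
    exact div_pos hpos (by norm_num)
  have hω0 : 0 < ω := hω ▸ sqrt_pos.2 h5
  have hγ : γ = 5 * ν * ω ^ 2 := by rw [hω, sq_sqrt h5.le]; field_simp
  set c := D ^ 2 * μ / ν with hc
  have hνc : ν * c = μ * D ^ 2 := by rw [hc]; field_simp
  have hκc : κ = 2 * γ * c + D ^ 2 := by rw [hc]; field_simp; linear_combination hκ
  set g := halfSqAddMulDeriv c (fun k => iteratedDeriv k H)
  have hg : ∀ k < 4, ∀ x ∈ I, HasDerivAt (g k) (g (k + 1) x) x := fun k hk x hx =>
    hasDerivAt_halfSqAddMulDeriv (fun j hj => hH.hasDerivAt_iteratedDeriv hj hx) k hk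
  have hJ : IsOpen ((fun t => arctan t / ω) ⁻¹' I) := hI.preimage (by fun_prop)
  have hw : ∀ k < 4, ∀ t ∈ (fun t => arctan t / ω) ⁻¹' I,
      HasDerivAt (pointTransformDeriv ω g k) (pointTransformDeriv ω g (k + 1) t) t :=
    fun k hk t ht => hasDerivAt_pointTransformDeriv hω0.ne' (fun j hj => hg j hj _ ht) k hk
  have hvw : v = pointTransformDeriv ω g 0 := by
    funext t
    simp [hv, pointTransformDeriv, g, halfSqAddMulDeriv]
  rw [image_tan_mul_eq_preimage hω0 hIsub, hvw]
  refine ⟨fourTimesDiffOn_of_hasDerivAt hJ hw, fun t ht => ?_⟩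
  rw [eqOn_iteratedDeriv_of_hasDerivAt hJ hw 4 le_rfl ht]
  refine pointTransformDeriv_four_eq hω0.ne' ((mul_eq_zero.1 ?_).resolve_left hν)
  rw [← travelling_wave_eq_mul_halfSqAddMulDeriv hνc hκc hγ]
  simpa using hODE _ ht

/-- Case `ν ≠ 0`, `γ/ν > 0`, `κν = (2γμ + ν)D²`, `ω = √(γ/(5ν))`, `α = 4ν`, `β = 3ν`:
if `H` is a four times differentiable solution of the travelling-wave ODE
`(ν H + μ D²) H'''' + 4ν H' H''' + 3ν (H'')² + (2γ H + κ − D²) H'' + 2γ (H')² = 0`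
on an open interval `I ⊆ (−π/(2ω), π/(2ω))`, then
`v(t) = (1 + t²)^{3/2} (H(arctan(t)/ω)²/2 + (D²μ/ν) H(arctan(t)/ω))` is four times
differentiable on `J = tan(ω ·) '' I` and satisfies `v''''(t) = 9 (1 + t²)⁻⁴ v(t)`
on `J`. -/
theorem linearized_equation (γ μ ν κ D : ℝ) (hν : ν ≠ 0) (hpos : γ / ν > 0)
    (hκ : κ * ν = (2 * γ * μ + ν) * D ^ 2)
    (ω : ℝ) (hω : ω = Real.sqrt (γ / (5 * ν)))
    (I : Set ℝ) (hI : IsOpen I) (hI' : I.OrdConnected)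
    (hIsub : I ⊆ Set.Ioo (-(Real.pi / (2 * ω))) (Real.pi / (2 * ω)))
    (H : ℝ → ℝ) (hH : FourTimesDiffOn H I)
    (hODE : ∀ x ∈ I,
      (ν * H x + μ * D ^ 2) * iteratedDeriv 4 H x
        + 4 * ν * deriv H x * iteratedDeriv 3 H x
        + 3 * ν * (iteratedDeriv 2 H x) ^ 2
        + (2 * γ * H x + κ - D ^ 2) * iteratedDeriv 2 H x
        + 2 * γ * (deriv H x) ^ 2 = 0)
    (v : ℝ → ℝ)
    (hv : ∀ t : ℝ,
      v t = Real.sqrt (1 + t ^ 2) ^ 3 *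
        ((H (Real.arctan t / ω)) ^ 2 / 2 + (D ^ 2 * μ / ν) * H (Real.arctan t / ω))) :
    FourTimesDiffOn v ((fun x => Real.tan (ω * x)) '' I) ∧
      ∀ t ∈ (fun x => Real.tan (ω * x)) '' I,
        iteratedDeriv 4 v t = 9 / (1 + t ^ 2) ^ 4 * v t :=
  linearized_equation_general γ μ ν κ D hν hpos hκ ω hω I hI hIsub H hH hODE v hv
end
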